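/- arXiv:2103.12223 — 6 statements merged into one kernel-verified Lean document; each statement's English description precedes it below -/
import Mathlib

section
/- Consider the homogeneous opinion dynamics with zero inputs and uniform attention $u_i = u$ for all agents, and let $J = Dg(0)$ denote the Jacobian (the derivative of the vector field $g$) at the neutral state $Z = 0$. If $v \in \mathbb{R}^{N_a}$ is an eigenvector of the adjacency matrix $\tilde A$ with eigenvalue $\lambda$, and $w \in \mathbb{R}^{N_o}$ satisfies $\sum_{j=1}^{N_o} w_j = 0$, then the matrix $v \otimes w \in \mathbb{R}^{N_a \times N_o}$ defined by $(v \otimes w)_{ij} = v_i w_j$ is an eigenvector of $J$ with eigenvalue $-d + u(\alpha - \beta + \lambda(\gamma - \delta))$, i.e., $J(v \otimes w) = \big(-d + u(\alpha - \beta + \lambda(\gamma - \delta))\big)(v \otimes w)$. -/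
/-- For the homogeneous opinion dynamics with zero inputs and uniform
attention `u`, if `v` is an eigenvector of the adjacency matrix with eigenvalue `λ`
and `w` sums to zero, then `v ⊗ w` is an eigenvector of the Jacobian `J = Dg(0)`
with eigenvalue `-d + u(α - β + λ(γ - δ))`. -/
theorem stmt_4 (Na No : ℕ) (hNo : 2 ≤ No)
    (d u α β γ δ : ℝ) (hd : 0 < d) (hu : 0 ≤ u)
    (a : Fin Na → Fin Na → ℝ) (ha : ∀ i k, a i k = 0 ∨ a i k = 1)
    (hdiag : ∀ i, a i i = 0)
    (S1 S2 : ℝ → ℝ) (hS10 : S1 0 = 0) (hS20 : S2 0 = 0)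
    (hS1 : HasDerivAt S1 1 0) (hS2 : HasDerivAt S2 1 0)
    (F g : (Fin Na → Fin No → ℝ) → Fin Na → Fin No → ℝ)
    (hF : ∀ Z i j, F Z i j =
      -d * Z i j
        + u * (S1 (α * Z i j + γ * ∑ k ∈ Finset.univ.erase i, a i k * Z k j)
          + ∑ l ∈ Finset.univ.erase j,
              S2 (β * Z i l + δ * ∑ k ∈ Finset.univ.erase i, a i k * Z k l)))
    (hg : ∀ Z i j, g Z i j = F Z i j - (1 / (No : ℝ)) * ∑ l, F Z i l)
    (J : (Fin Na → Fin No → ℝ) →L[ℝ] (Fin Na → Fin No → ℝ))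
    (hJ : HasFDerivAt g J 0)
    (lam : ℝ) (v : Fin Na → ℝ) (hv0 : v ≠ 0)
    (heig : ∀ i, ∑ k, a i k * v k = lam * v i)
    (w : Fin No → ℝ) (hw : ∑ j, w j = 0) :
    J (fun i j => v i * w j)
      = fun i j => (-d + u * (α - β + lam * (γ - δ))) * (v i * w j) := by

  have key : ∀ (c : ℝ) (S : ℝ → ℝ), S 0 = 0 → HasDerivAt S 1 0 →
      HasDerivAt (fun t : ℝ => S (c * t)) c 0 := by
    intro c S hS0 hS
    have hin : HasDerivAt (fun t : ℝ => c * t) c 0 := by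
      simpa using (hasDerivAt_id (0:ℝ)).const_mul c
    have h0 : (fun t : ℝ => c * t) 0 = 0 := by simp
    have := (h0 ▸ hS).comp 0 hin
    rw [one_mul] at this; exact this
  set M : Fin Na → Fin No → ℝ := fun i j => v i * w j with hM
  set μ : ℝ := -d + u * (α - β + lam * (γ - δ)) with hμ
  have hsum : ∀ i, ∑ k ∈ Finset.univ.erase i, a i k * v k = lam * v i := by
    intro i
    rw [← heig i]
    exact Finset.sum_erase _ (by simp [hdiag i])
  have hFrw : ∀ (t : ℝ) (i : Fin Na) (j : Fin No), F (t • M) i j =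
      -d * ((v i * w j) * t) + u * (S1 ((α + γ * lam) * (v i * w j) * t)
        + ∑ l ∈ Finset.univ.erase j, S2 ((β + δ * lam) * (v i * w l) * t)) := by
    intro t i j
    rw [hF]
    have hs : ∀ (j' : Fin No), ∑ k ∈ Finset.univ.erase i, a i k * (t • M) k j'
        = t * w j' * (lam * v i) := by
      intro j'
      have : ∑ k ∈ Finset.univ.erase i, a i k * (t • M) k j'
          = (t * w j') * ∑ k ∈ Finset.univ.erase i, a i k * v k := by
        rw [Finset.mul_sum]
        refine Finset.sum_congr rfl fun k _ => ?_
        simp [hM, Pi.smul_apply, smul_eq_mul]; ring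
      rw [this, hsum i]
    have hMt : ∀ (i' : Fin Na) (j' : Fin No), (t • M) i' j' = t * (v i' * w j') := by
      intro i' j'; simp [hM, Pi.smul_apply, smul_eq_mul]
    rw [hMt i j]
    congr 1
    · ring
    congr 1
    congr 1
    · rw [hs j]; ring
    · refine Finset.sum_congr rfl fun l _ => ?_
      rw [hMt i l, hs l]; ring
  have hFderiv : ∀ (i : Fin Na) (j : Fin No),
      HasDerivAt (fun t : ℝ => F (t • M) i j) (μ * (v i * w j)) 0 := by
    intro i j
    have h1 : HasDerivAt (fun t : ℝ => -d * ((v i * w j) * t)) (-d * (v i * w j)) 0 := by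
      simpa using ((hasDerivAt_id (0:ℝ)).const_mul (v i * w j)).const_mul (-d)
    have h2 : HasDerivAt (fun t : ℝ => S1 ((α + γ * lam) * (v i * w j) * t))
        ((α + γ * lam) * (v i * w j)) 0 := key _ _ hS10 hS1
    have h3 : HasDerivAt (fun t : ℝ => ∑ l ∈ Finset.univ.erase j,
          S2 ((β + δ * lam) * (v i * w l) * t))
        (∑ l ∈ Finset.univ.erase j, (β + δ * lam) * (v i * w l)) 0 :=
      HasDerivAt.fun_sum fun l _ => key _ _ hS20 hS2
    have h := h1.add ((h2.add h3).const_mul u)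
    have hval : -d * (v i * w j) + u * ((α + γ * lam) * (v i * w j)
        + ∑ l ∈ Finset.univ.erase j, (β + δ * lam) * (v i * w l)) = μ * (v i * w j) := by
      have hse : ∑ l ∈ Finset.univ.erase j, (β + δ * lam) * (v i * w l)
          = (β + δ * lam) * v i * (0 - w j) := by
        rw [← hw, ← Finset.sum_erase_eq_sub (Finset.mem_univ j), Finset.mul_sum]
        refine Finset.sum_congr rfl fun l _ => ?_; ring
      rw [hse, hμ]; ring
    rw [← hval]
    have hfun : (fun t : ℝ => F (t • M) i j) = fun t : ℝ =>
        -d * ((v i * w j) * t) + u * (S1 ((α + γ * lam) * (v i * w j) * t)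
          + ∑ l ∈ Finset.univ.erase j, S2 ((β + δ * lam) * (v i * w l) * t)) :=
      funext fun t => hFrw t i j
    rw [hfun]
    exact h
  have hgderiv : ∀ (i : Fin Na) (j : Fin No),
      HasDerivAt (fun t : ℝ => g (t • M) i j) (μ * (v i * w j)) 0 := by
    intro i j
    have h := (hFderiv i j).fun_sub
      ((HasDerivAt.fun_sum fun l (_ : l ∈ Finset.univ) => hFderiv i l).const_mul (1 / (No : ℝ)))
    have hval : μ * (v i * w j) - 1 / (No : ℝ) * ∑ l, μ * (v i * w l) = μ * (v i * w j) := by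
      have : ∑ l, μ * (v i * w l) = μ * v i * ∑ l, w l := by
        rw [Finset.mul_sum]; exact Finset.sum_congr rfl fun l _ => by ring
      rw [this, hw]; ring
    rw [← hval]
    have hfun : (fun t : ℝ => g (t • M) i j)
        = fun t : ℝ => F (t • M) i j - 1 / (No : ℝ) * ∑ l, F (t • M) i l :=
      funext fun t => hg (t • M) i j
    rw [hfun]
    exact h
  have hleft : HasDerivAt (fun t : ℝ => g (t • M)) (J M) 0 := by
    have hsmul : HasDerivAt (fun t : ℝ => t • M) M 0 := by
      simpa using (hasDerivAt_id (0:ℝ)).smul_const M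
    have h0 : (0:ℝ) • M = 0 := zero_smul _ _
    have hJ' : HasFDerivAt g J ((fun t : ℝ => t • M) 0) := by
      show HasFDerivAt g J ((0:ℝ) • M); rw [h0]; exact hJ
    exact hJ'.comp_hasDerivAt 0 hsmul
  have hright : HasDerivAt (fun t : ℝ => g (t • M)) (fun i j => μ * (v i * w j)) 0 := by
    rw [hasDerivAt_pi]
    intro i
    rw [hasDerivAt_pi]
    intro j
    exact hgderiv i j
  exact hleft.unique hright
end

section
/- Consider the homogeneous opinion dynamics with zero inputs and uniform attention $u$, over a network whose adjacency matrix $\tilde A$ is real symmetric with zero diagonal and largest eigenvalue $\lambda_{\max}$. Assume $d > 0$, $\alpha - \beta > 0$, $\gamma > \delta$, $\alpha - \beta + \lambda_{\max}(\gamma - \delta) > 0$, and $0 < u < u_a := \frac{d}{\alpha - \beta + \lambda_{\max}(\gamma - \delta)}$. Then the Jacobian $J = Dg(0)$ of the dynamics at the neutral state is negative definite on the simplex subspace: for every nonzero $Z \in \mathbb{R}^{N_a \times N_o}$ with $\sum_{j=1}^{N_o} z_{ij} = 0$ for every agent $i$, the Frobenius inner product satisfies $\langle Z, J Z \rangle <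 0$. In particular the neutral state is a linearly stable equilibrium for $u < u_a$. -/
open Matrix in
lemma rayleigh_aux (n : ℕ) (a : Fin n → Fin n → ℝ) (hsymm : ∀ i k, a i k = a k i)
    (lamMax : ℝ)
    (hmax : ∀ (lam : ℝ) (v : Fin n → ℝ), v ≠ 0 →
      (∀ i, ∑ k, a i k * v k = lam * v i) → lam ≤ lamMax)
    (v : Fin n → ℝ) :
    ∑ i, v i * ∑ k, a i k * v k ≤ lamMax * ∑ i, (v i)^2 := by
  set A : Matrix (Fin n) (Fin n) ℝ := Matrix.of a with hA'
  have hA : A.IsHermitian := by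
    ext i k
    simp [Matrix.conjTranspose_apply, hA', hsymm k i]
  set U : Matrix (Fin n) (Fin n) ℝ := (hA.eigenvectorUnitary : Matrix (Fin n) (Fin n) ℝ) with hU
  set μ : Fin n → ℝ := hA.eigenvalues with hμdef
  have hμ : ∀ p, μ p ≤ lamMax := by
    intro p
    refine hmax (μ p) (⇑(hA.eigenvectorBasis p)) ?_ ?_
    · intro h0
      exact hA.eigenvectorBasis.orthonormal.ne_zero p (by ext k; exact congrFun h0 k)
    · intro i
      have := congrFun (hA.mulVec_eigenvectorBasis p) i
      simpa [Matrix.mulVec, dotProduct, hA'] using this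
  set w : Fin n → ℝ := (star U) *ᵥ v with hw
  have hUU : U * star U = 1 := (Matrix.mem_unitaryGroup_iff).mp hA.eigenvectorUnitary.2
  have hspec : A = U * Matrix.diagonal μ * star U := by
    have := hA.spectral_theorem
    simpa using this
  have hvU : v ᵥ* U = w := by
    ext p
    simp [hw, Matrix.vecMul, Matrix.mulVec, dotProduct, mul_comm, Matrix.star_apply]
  have h1 : v ⬝ᵥ (A *ᵥ v) = ∑ p, μ p * (w p)^2 := by
    rw [hspec]
    rw [← Matrix.mulVec_mulVec, ← Matrix.mulVec_mulVec]
    rw [Matrix.dotProduct_mulVec v U]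
    rw [hvU, ← hw]
    simp only [Matrix.mulVec_diagonal, dotProduct, pow_two]
    exact Finset.sum_congr rfl fun p _ => by ring
  have h2 : v ⬝ᵥ v = ∑ p, (w p)^2 := by
    have hvw : v ⬝ᵥ v = w ⬝ᵥ w := by
      calc v ⬝ᵥ v = v ⬝ᵥ ((U * star U) *ᵥ v) := by rw [hUU, Matrix.one_mulVec]
        _ = v ⬝ᵥ (U *ᵥ w) := by rw [← Matrix.mulVec_mulVec, ← hw]
        _ = (v ᵥ* U) ⬝ᵥ w := Matrix.dotProduct_mulVec v U w
        _ = w ⬝ᵥ w := by rw [hvU]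
    rw [hvw]
    simp [dotProduct, pow_two]
  have hlhs : ∑ i, v i * ∑ k, a i k * v k = v ⬝ᵥ (A *ᵥ v) := by
    simp [dotProduct, Matrix.mulVec, hA']
  have hrhs : ∑ i, (v i)^2 = v ⬝ᵥ v := by
    simp [dotProduct, pow_two]
  rw [hlhs, hrhs, h1, h2, Finset.mul_sum]
  exact Finset.sum_le_sum fun p _ => mul_le_mul_of_nonneg_right (hμ p) (sq_nonneg _)



/-- For `0 < u < u_a` in the cooperative regime `γ > δ`, the Jacobian
`J = Dg(0)` of the homogeneous opinion dynamics at the neutral state is negative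
definite on the simplex subspace: `⟨Z, J Z⟩ < 0` (Frobenius inner product) for every
nonzero `Z` with zero row sums. -/
theorem stmt_7 (Na No : ℕ) (hNo : 2 ≤ No)
    (d u α β γ δ lamMax : ℝ)
    (hd : 0 < d) (hab : 0 < α - β) (hgd : δ < γ)
    (a : Fin Na → Fin Na → ℝ) (ha : ∀ i k, a i k = 0 ∨ a i k = 1)
    (hdiag : ∀ i, a i i = 0) (hsymm : ∀ i k, a i k = a k i)
    (hmaxEig : ∃ v : Fin Na → ℝ, v ≠ 0 ∧ ∀ i, ∑ k, a i k * v k = lamMax * v i)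
    (hmax : ∀ (lam : ℝ) (v : Fin Na → ℝ), v ≠ 0 →
      (∀ i, ∑ k, a i k * v k = lam * v i) → lam ≤ lamMax)
    (hposMax : 0 < α - β + lamMax * (γ - δ))
    (hu0 : 0 < u) (hua : u < d / (α - β + lamMax * (γ - δ)))
    (S1 S2 : ℝ → ℝ) (hS10 : S1 0 = 0) (hS20 : S2 0 = 0)
    (hS1 : HasDerivAt S1 1 0) (hS2 : HasDerivAt S2 1 0)
    (F g : (Fin Na → Fin No → ℝ) → Fin Na → Fin No → ℝ)
    (hF : ∀ Z i j, F Z i j =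
      -d * Z i j
        + u * (S1 (α * Z i j + γ * ∑ k ∈ Finset.univ.erase i, a i k * Z k j)
          + ∑ l ∈ Finset.univ.erase j,
              S2 (β * Z i l + δ * ∑ k ∈ Finset.univ.erase i, a i k * Z k l)))
    (hg : ∀ Z i j, g Z i j = F Z i j - (1 / (No : ℝ)) * ∑ l, F Z i l)
    (J : (Fin Na → Fin No → ℝ) →L[ℝ] (Fin Na → Fin No → ℝ))
    (hJ : HasFDerivAt g J 0) :
    ∀ Z : Fin Na → Fin No → ℝ, Z ≠ 0 → (∀ i, ∑ j, Z i j = 0) →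
      ∑ i, ∑ j, Z i j * J Z i j < 0 := by
  classical
  -- coordinate projections as continuous linear maps
  set φ : Fin Na → Fin No → ((Fin Na → Fin No → ℝ) →L[ℝ] ℝ) :=
    fun i j => (ContinuousLinearMap.proj j : (Fin No → ℝ) →L[ℝ] ℝ).comp
      (ContinuousLinearMap.proj i : (Fin Na → Fin No → ℝ) →L[ℝ] (Fin No → ℝ)) with hφdef
  have hφ : ∀ (i : Fin Na) (j : Fin No),
      HasFDerivAt (fun Z : Fin Na → Fin No → ℝ => Z i j) (φ i j) 0 :=
    fun i j => (φ i j).hasFDerivAt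
  -- inner linear arguments
  set ℓ : ℝ → ℝ → Fin Na → Fin No → ((Fin Na → Fin No → ℝ) →L[ℝ] ℝ) :=
    fun b c i j => b • φ i j + c • ∑ k ∈ Finset.univ.erase i, a i k • φ k j with hℓdef
  have hℓ : ∀ (b c : ℝ) (i : Fin Na) (j : Fin No), HasFDerivAt
      (fun Z : Fin Na → Fin No → ℝ =>
        b * Z i j + c * ∑ k ∈ Finset.univ.erase i, a i k * Z k j)
      (ℓ b c i j) 0 :=
    fun b c i j => ((hφ i j).const_mul b).add
      ((HasFDerivAt.fun_sum fun k _ => (hφ k j).const_mul (a i k)).const_mul c)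
  have hval : ∀ (b c : ℝ) (i : Fin Na) (j : Fin No),
      (0:ℝ) = b * (0 : Fin Na → Fin No → ℝ) i j
        + c * ∑ k ∈ Finset.univ.erase i, a i k * (0 : Fin Na → Fin No → ℝ) k j := by
    intro b c i j; simp
  have hS1c : ∀ (i : Fin Na) (j : Fin No), HasFDerivAt
      (fun Z : Fin Na → Fin No → ℝ =>
        S1 (α * Z i j + γ * ∑ k ∈ Finset.univ.erase i, a i k * Z k j))
      (ℓ α γ i j) 0 := by
    intro i j
    have h := HasDerivAt.comp_hasFDerivAt_of_eq 0 hS1 (hℓ α γ i j) (hval α γ i j)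
    simpa [Function.comp_def] using h
  have hS2c : ∀ (i : Fin Na) (l : Fin No), HasFDerivAt
      (fun Z : Fin Na → Fin No → ℝ =>
        S2 (β * Z i l + δ * ∑ k ∈ Finset.univ.erase i, a i k * Z k l))
      (ℓ β δ i l) 0 := by
    intro i l
    have h := HasDerivAt.comp_hasFDerivAt_of_eq 0 hS2 (hℓ β δ i l) (hval β δ i l)
    simpa [Function.comp_def] using h
  -- derivative of F componentwise
  set LF : Fin Na → Fin No → ((Fin Na → Fin No → ℝ) →L[ℝ] ℝ) := fun i j =>
    (-d) • φ i j + u • (ℓ α γ i j + ∑ l ∈ Finset.univ.erase j, ℓ β δ i l) with hLFdef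
  have hLFd : ∀ (i : Fin Na) (j : Fin No),
      HasFDerivAt (fun Z => F Z i j) (LF i j) 0 := by
    intro i j
    have heq : (fun Z : Fin Na → Fin No → ℝ => F Z i j) = fun Z =>
        -d * Z i j
          + u * (S1 (α * Z i j + γ * ∑ k ∈ Finset.univ.erase i, a i k * Z k j)
            + ∑ l ∈ Finset.univ.erase j,
                S2 (β * Z i l + δ * ∑ k ∈ Finset.univ.erase i, a i k * Z k l)) :=
      funext fun Z => hF Z i j
    rw [heq]
    exact ((hφ i j).const_mul (-d)).add
      (((hS1c i j).add (HasFDerivAt.fun_sum fun l _ => hS2c i l)).const_mul u)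
  -- derivative of g componentwise
  set LG : Fin Na → Fin No → ((Fin Na → Fin No → ℝ) →L[ℝ] ℝ) := fun i j =>
    LF i j - (1 / (No : ℝ)) • ∑ l, LF i l with hLGdef
  have hLGd : ∀ (i : Fin Na) (j : Fin No),
      HasFDerivAt (fun Z => g Z i j) (LG i j) 0 := by
    intro i j
    have heq : (fun Z : Fin Na → Fin No → ℝ => g Z i j) = fun Z =>
        F Z i j - (1 / (No : ℝ)) * ∑ l, F Z i l := funext fun Z => hg Z i j
    rw [heq]
    exact (hLFd i j).sub
      ((HasFDerivAt.fun_sum fun l _ => hLFd i l).const_mul (1 / (No : ℝ)))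
  set L : (Fin Na → Fin No → ℝ) →L[ℝ] (Fin Na → Fin No → ℝ) :=
    ContinuousLinearMap.pi (fun i => ContinuousLinearMap.pi (fun j => LG i j)) with hLdef
  have hLd : HasFDerivAt g L 0 :=
    hasFDerivAt_pi.2 fun i => hasFDerivAt_pi.2 fun j => hLGd i j
  have hJL : J = L := hJ.unique hLd
  intro Z hZ hrow
  set W : Fin Na → Fin No → ℝ :=
    fun i j => ∑ k ∈ Finset.univ.erase i, a i k * Z k j with hWdef
  have hφZ : ∀ (i : Fin Na) (j : Fin No), φ i j Z = Z i j := fun i j => rfl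
  have hℓZ : ∀ (b c : ℝ) (i : Fin Na) (j : Fin No),
      ℓ b c i j Z = b * Z i j + c * W i j := by
    intro b c i j
    simp [hℓdef, hWdef, ContinuousLinearMap.sum_apply, hφZ, Finset.mul_sum]
  have hLFZ : ∀ (i : Fin Na) (j : Fin No), LF i j Z =
      -d * Z i j + u * ((α * Z i j + γ * W i j)
        + ∑ l ∈ Finset.univ.erase j, (β * Z i l + δ * W i l)) := by
    intro i j
    simp [hLFdef, ContinuousLinearMap.sum_apply, hℓZ, hφZ]
    ring
  have hErow : ∀ (i : Fin Na) (j : Fin No),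
      ∑ l ∈ Finset.univ.erase j, Z i l = -Z i j := by
    intro i j
    rw [Finset.sum_erase_eq_sub (Finset.mem_univ j), hrow i]
    ring
  have hWrow : ∀ (i : Fin Na) (j : Fin No),
      ∑ l ∈ Finset.univ.erase j, W i l = -W i j := by
    intro i j
    have h1 : ∑ l ∈ Finset.univ.erase j, W i l
        = ∑ k ∈ Finset.univ.erase i, a i k * ∑ l ∈ Finset.univ.erase j, Z k l := by
      simp only [hWdef, Finset.mul_sum]
      exact Finset.sum_comm
    rw [h1]
    simp only [hErow, mul_neg]
    rw [Finset.sum_neg_distrib]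
  have hLFZ' : ∀ (i : Fin Na) (j : Fin No),
      LF i j Z = (u * (α - β) - d) * Z i j + (u * (γ - δ)) * W i j := by
    intro i j
    rw [hLFZ i j, Finset.sum_add_distrib, ← Finset.mul_sum, ← Finset.mul_sum,
      hErow i j, hWrow i j]
    ring
  have hWfullrow : ∀ i : Fin Na, ∑ l, W i l = 0 := by
    intro i
    have h1 : ∑ l, W i l = ∑ k ∈ Finset.univ.erase i, a i k * ∑ l, Z k l := by
      simp only [hWdef, Finset.mul_sum]
      exact Finset.sum_comm
    simp [h1, hrow]
  have hLFsum : ∀ i : Fin Na, ∑ l, LF i l Z = 0 := by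
    intro i
    simp only [hLFZ']
    rw [Finset.sum_add_distrib, ← Finset.mul_sum, ← Finset.mul_sum, hrow i, hWfullrow i]
    ring
  have hJZ : ∀ (i : Fin Na) (j : Fin No),
      J Z i j = (u * (α - β) - d) * Z i j + (u * (γ - δ)) * W i j := by
    intro i j
    rw [hJL]
    have : L Z i j = LF i j Z - (1 / (No : ℝ)) * ∑ l, LF i l Z := by
      simp [hLdef, hLGdef, ContinuousLinearMap.pi_apply, ContinuousLinearMap.sub_apply,
        ContinuousLinearMap.smul_apply, ContinuousLinearMap.sum_apply, smul_eq_mul]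
    rw [this, hLFsum i, hLFZ' i j]
    ring
  -- the quadratic form
  have hWfull : ∀ (i : Fin Na) (j : Fin No), W i j = ∑ k, a i k * Z k j := by
    intro i j
    simp only [hWdef]
    rw [Finset.sum_erase_eq_sub (Finset.mem_univ i), hdiag i]
    ring
  set S := ∑ i, ∑ j, (Z i j)^2 with hSdef
  have hSpos : 0 < S := by
    obtain ⟨i, hi⟩ := Function.ne_iff.mp hZ
    obtain ⟨j, hj⟩ := Function.ne_iff.mp hi
    have hj' : (0:ℝ) < (Z i j)^2 :=
      lt_of_le_of_ne (sq_nonneg _) (Ne.symm (pow_ne_zero 2 hj))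
    refine Finset.sum_pos' (fun i _ => Finset.sum_nonneg fun j _ => sq_nonneg _)
      ⟨i, Finset.mem_univ i, ?_⟩
    exact Finset.sum_pos' (fun j _ => sq_nonneg _) ⟨j, Finset.mem_univ j, hj'⟩
  have hT : ∑ j, ∑ i, Z i j * W i j ≤ lamMax * S := by
    have hS' : S = ∑ j, ∑ i, (Z i j)^2 := Finset.sum_comm
    rw [hS', Finset.mul_sum]
    refine Finset.sum_le_sum fun j _ => ?_
    have := rayleigh_aux Na a hsymm lamMax hmax (fun i => Z i j)
    simpa [hWfull] using this
  have hc2 : 0 < u * (γ - δ) := mul_pos hu0 (by linarith)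
  have hcoef : u * (α - β + lamMax * (γ - δ)) - d < 0 := by
    have := (lt_div_iff₀ hposMax).mp hua
    linarith
  calc ∑ i, ∑ j, Z i j * J Z i j
      = (u * (α - β) - d) * S + (u * (γ - δ)) * ∑ j, ∑ i, Z i j * W i j := by
        have h1 : ∀ (i : Fin Na) (j : Fin No), Z i j * J Z i j
            = (u * (α - β) - d) * (Z i j)^2 + (u * (γ - δ)) * (Z i j * W i j) := by
          intro i j; rw [hJZ i j]; ring
        simp only [h1, Finset.sum_add_distrib, ← Finset.mul_sum]
        rw [hSdef]
        congr 1
        rw [Finset.sum_comm]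
    _ ≤ (u * (α - β) - d) * S + (u * (γ - δ)) * (lamMax * S) :=
        add_le_add le_rfl (mul_le_mul_of_nonneg_left hT hc2.le)
    _ = (u * (α - β + lamMax * (γ - δ)) - d) * S := by ring
    _ < 0 := mul_neg_of_neg_of_pos hcoef hSpos
end

section
/- Consider the homogeneous opinion dynamics with zero inputs and uniform attention, over a network whose adjacency matrix $\tilde A$ is real symmetric with zero diagonal. Assume $d > 0$, $\gamma > \delta$, that the largest eigenvalue $\lambda_{\max}$ of $\tilde A$ is simple with eigenvector $v_{\max}$, that $\alpha - \beta + \lambda_{\max}(\gamma - \delta) > 0$, and set the attention to the agreement threshold $u = u_a = \frac{d}{\alpha - \beta + \lambda_{\max}(\gamma - \delta)}$. Then the kernel of the Jacobian $J = Dg(0)$ of the dynamics at the neutral state, restricted to the simplex subspace, is exactly $\{v_{\max} \otimes w : w \in \mathbb{R}^{N_o},\ \sum_{j=1}^{N_o} w_j = 0\}$, where $(v_{\max} \otimes w)_{ij} = (v_{\max})_i w_j$; in particular this kernel has dimension $N_o - 1$. -/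
lemma jac_formula (Na No : ℕ) (d α β γ δ u : ℝ)
    (a : Fin Na → Fin Na → ℝ) (hdiag : ∀ i, a i i = 0)
    (S1 S2 : ℝ → ℝ) (hS1 : HasDerivAt S1 1 0) (hS2 : HasDerivAt S2 1 0)
    (F g : (Fin Na → Fin No → ℝ) → Fin Na → Fin No → ℝ)
    (hF : ∀ Z i j, F Z i j =
      -d * Z i j
        + u * (S1 (α * Z i j + γ * ∑ k ∈ Finset.univ.erase i, a i k * Z k j)
          + ∑ l ∈ Finset.univ.erase j,
              S2 (β * Z i l + δ * ∑ k ∈ Finset.univ.erase i, a i k * Z k l)))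
    (hg : ∀ Z i j, g Z i j = F Z i j - (1 / (No : ℝ)) * ∑ l, F Z i l)
    (J : (Fin Na → Fin No → ℝ) →L[ℝ] (Fin Na → Fin No → ℝ))
    (hJ : HasFDerivAt g J 0)
    (Z : Fin Na → Fin No → ℝ) (hZ : ∀ i, ∑ j, Z i j = 0) :
    J Z = fun i j => (-d + u * (α - β)) * Z i j + u * (γ - δ) * ∑ k, a i k * Z k j := by
  set Phi : Fin Na → Fin No → ℝ := fun i j =>
    -d * Z i j + u * ((α * Z i j + γ * ∑ k ∈ Finset.univ.erase i, a i k * Z k j)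
      + ∑ l ∈ Finset.univ.erase j,
          (β * Z i l + δ * ∑ k ∈ Finset.univ.erase i, a i k * Z k l)) with hPhidef
  have hFder : ∀ i j, HasDerivAt (fun t : ℝ => F (t • Z) i j) (Phi i j) 0 := by
    intro i j
    simp only [hF, Pi.smul_apply, smul_eq_mul]
    have hin1 : HasDerivAt (fun t : ℝ =>
        α * (t * Z i j) + γ * ∑ k ∈ Finset.univ.erase i, a i k * (t * Z k j))
        (α * Z i j + γ * ∑ k ∈ Finset.univ.erase i, a i k * Z k j) 0 :=
      ((hasDerivAt_mul_const (Z i j)).const_mul α).add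
        ((HasDerivAt.fun_sum fun k _ =>
          (hasDerivAt_mul_const (Z k j)).const_mul (a i k)).const_mul γ)
    have hS1' : HasDerivAt S1 1
        (α * ((0:ℝ) * Z i j) + γ * ∑ k ∈ Finset.univ.erase i, a i k * ((0:ℝ) * Z k j)) := by
      simpa using hS1
    have hc1 : HasDerivAt (fun t : ℝ =>
        S1 (α * (t * Z i j) + γ * ∑ k ∈ Finset.univ.erase i, a i k * (t * Z k j)))
        (α * Z i j + γ * ∑ k ∈ Finset.univ.erase i, a i k * Z k j) 0 := by
      simpa [Function.comp_def] using hS1'.comp (0:ℝ) hin1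
    have hc2 : ∀ l, HasDerivAt (fun t : ℝ =>
        S2 (β * (t * Z i l) + δ * ∑ k ∈ Finset.univ.erase i, a i k * (t * Z k l)))
        (β * Z i l + δ * ∑ k ∈ Finset.univ.erase i, a i k * Z k l) 0 := by
      intro l
      have hin2 : HasDerivAt (fun t : ℝ =>
          β * (t * Z i l) + δ * ∑ k ∈ Finset.univ.erase i, a i k * (t * Z k l))
          (β * Z i l + δ * ∑ k ∈ Finset.univ.erase i, a i k * Z k l) 0 :=
        ((hasDerivAt_mul_const (Z i l)).const_mul β).add
          ((HasDerivAt.fun_sum fun k _ =>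
            (hasDerivAt_mul_const (Z k l)).const_mul (a i k)).const_mul δ)
      have hS2' : HasDerivAt S2 1
          (β * ((0:ℝ) * Z i l) + δ * ∑ k ∈ Finset.univ.erase i, a i k * ((0:ℝ) * Z k l)) := by
        simpa using hS2
      simpa [Function.comp_def] using hS2'.comp (0:ℝ) hin2
    exact ((hasDerivAt_mul_const (Z i j)).const_mul (-d)).add
      ((hc1.add (HasDerivAt.fun_sum fun l _ => hc2 l)).const_mul u)
  have hgder : ∀ i j, HasDerivAt (fun t : ℝ => g (t • Z) i j)
      (Phi i j - (1 / (No : ℝ)) * ∑ l, Phi i l) 0 := by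
    intro i j
    simp only [hg]
    exact (hFder i j).sub ((HasDerivAt.fun_sum fun l _ => hFder i l).const_mul (1 / (No : ℝ)))
  have h1 : HasDerivAt (fun t : ℝ => g (t • Z)) (J Z) 0 := by
    have hsm : HasDerivAt (fun t : ℝ => t • Z) Z 0 := by
      simpa using (hasDerivAt_id (0:ℝ)).smul_const Z
    have hJ' : HasFDerivAt g J ((0:ℝ) • Z) := by simpa using hJ
    simpa [Function.comp_def] using hJ'.comp_hasDerivAt (0:ℝ) hsm
  have hJZ : J Z = fun i j => Phi i j - (1 / (No : ℝ)) * ∑ l, Phi i l :=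
    h1.unique (hasDerivAt_pi.2 fun i => hasDerivAt_pi.2 fun j => hgder i j)
  -- now simplify using row sums zero
  have herase : ∀ i j, ∑ k ∈ Finset.univ.erase i, a i k * Z k j = ∑ k, a i k * Z k j := by
    intro i j
    rw [Finset.sum_erase_eq_sub (Finset.mem_univ i), hdiag i, zero_mul, sub_zero]
  have hBsum : ∀ i, ∑ l, ∑ k, a i k * Z k l = 0 := by
    intro i
    rw [Finset.sum_comm]
    exact Finset.sum_eq_zero fun k _ => by rw [← Finset.mul_sum, hZ k, mul_zero]
  have hc2sum : ∀ i, ∑ l, (β * Z i l + δ * ∑ k ∈ Finset.univ.erase i, a i k * Z k l) = 0 := by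
    intro i
    simp only [herase]
    rw [Finset.sum_add_distrib, ← Finset.mul_sum, ← Finset.mul_sum, hZ i, hBsum i,
      mul_zero, mul_zero, add_zero]
  have hPhi : ∀ i j, Phi i j =
      (-d + u * (α - β)) * Z i j + u * (γ - δ) * ∑ k, a i k * Z k j := by
    intro i j
    rw [hPhidef]
    simp only
    rw [Finset.sum_erase_eq_sub (Finset.mem_univ j), hc2sum i, zero_sub]
    simp only [herase]
    ring
  have hPhisum : ∀ i, ∑ l, Phi i l = 0 := by
    intro i
    simp only [hPhi]
    rw [Finset.sum_add_distrib, ← Finset.mul_sum, ← Finset.mul_sum, hZ i, hBsum i,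
      mul_zero, mul_zero, add_zero]
  rw [hJZ]
  funext i j
  rw [hPhisum i, mul_zero, sub_zero, hPhi i j]


/-- At the agreement threshold `u = u_a` (cooperative regime `γ > δ`,
simple largest eigenvalue `λ_max` of the symmetric adjacency matrix with eigenvector
`v_max`), the kernel of the Jacobian `J = Dg(0)` restricted to the simplex subspace is
exactly `{v_max ⊗ w : ∑_j w_j = 0}`, a subspace of dimension `N_o - 1`. -/
theorem stmt_8 (Na No : ℕ) (hNo : 2 ≤ No)
    (d α β γ δ lamMax : ℝ)
    (hd : 0 < d) (hgd : δ < γ)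
    (a : Fin Na → Fin Na → ℝ) (ha : ∀ i k, a i k = 0 ∨ a i k = 1)
    (hdiag : ∀ i, a i i = 0) (hsymm : ∀ i k, a i k = a k i)
    (vmax : Fin Na → ℝ) (hvmax0 : vmax ≠ 0)
    (heig : ∀ i, ∑ k, a i k * vmax k = lamMax * vmax i)
    (hmax : ∀ (lam : ℝ) (v : Fin Na → ℝ), v ≠ 0 →
      (∀ i, ∑ k, a i k * v k = lam * v i) → lam ≤ lamMax)
    (hsimple : ∀ v : Fin Na → ℝ,
      (∀ i, ∑ k, a i k * v k = lamMax * v i) → ∃ c : ℝ, v = c • vmax)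
    (hpos : 0 < α - β + lamMax * (γ - δ))
    (u : ℝ) (hu : u = d / (α - β + lamMax * (γ - δ)))
    (S1 S2 : ℝ → ℝ) (hS10 : S1 0 = 0) (hS20 : S2 0 = 0)
    (hS1 : HasDerivAt S1 1 0) (hS2 : HasDerivAt S2 1 0)
    (F g : (Fin Na → Fin No → ℝ) → Fin Na → Fin No → ℝ)
    (hF : ∀ Z i j, F Z i j =
      -d * Z i j
        + u * (S1 (α * Z i j + γ * ∑ k ∈ Finset.univ.erase i, a i k * Z k j)
          + ∑ l ∈ Finset.univ.erase j,
              S2 (β * Z i l + δ * ∑ k ∈ Finset.univ.erase i, a i k * Z k l)))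
    (hg : ∀ Z i j, g Z i j = F Z i j - (1 / (No : ℝ)) * ∑ l, F Z i l)
    (J : (Fin Na → Fin No → ℝ) →L[ℝ] (Fin Na → Fin No → ℝ))
    (hJ : HasFDerivAt g J 0) :
    (∀ Z : Fin Na → Fin No → ℝ, (∀ i, ∑ j, Z i j = 0) →
      (J Z = 0 ↔ ∃ w : Fin No → ℝ, (∑ j, w j = 0) ∧ Z = fun i j => vmax i * w j)) ∧
    Module.finrank ℝ
      ↥(Submodule.span ℝ {Z : Fin Na → Fin No → ℝ |
          ∃ w : Fin No → ℝ, (∑ j, w j = 0) ∧ Z = fun i j => vmax i * w j})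
      = No - 1 := by
  have hrel : u * (α - β + lamMax * (γ - δ)) = d := by
    rw [hu]; field_simp
  have hupos : 0 < u := by rw [hu]; exact div_pos hd hpos
  have hune : u * (γ - δ) ≠ 0 := by
    have : (0:ℝ) < γ - δ := by linarith
    exact (mul_pos hupos this).ne'
  obtain ⟨i0, hi0⟩ : ∃ i0, vmax i0 ≠ 0 := Function.ne_iff.1 hvmax0
  constructor
  · intro Z hZ
    have hkey := jac_formula Na No d α β γ δ u a hdiag S1 S2 hS1 hS2 F g hF hg J hJ Z hZ
    constructor
    · intro h0
      rw [hkey] at h0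
      have heigcol : ∀ j i, ∑ k, a i k * Z k j = lamMax * Z i j := by
        intro j i
        have := congrFun (congrFun h0 i) j
        simp only [Pi.zero_apply] at this
        have h2 : u * (γ - δ) * ((∑ k, a i k * Z k j) - lamMax * Z i j) = 0 := by
          linear_combination this - Z i j * hrel
        have := mul_eq_zero.1 h2
        rcases this with h | h
        · exact absurd h hune
        · linarith [sub_eq_zero.1 h]
      choose w hw using fun j => hsimple (fun i => Z i j) (heigcol j)
      have hZw : Z = fun i j => vmax i * w j := by
        funext i j
        have := congrFun (hw j) i
        simp only [Pi.smul_apply, smul_eq_mul] at this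
        rw [this, mul_comm]
      refine ⟨w, ?_, hZw⟩
      have := hZ i0
      rw [hZw] at this
      simp only at this
      rw [← Finset.mul_sum] at this
      rcases mul_eq_zero.1 this with h | h
      · exact absurd h hi0
      · exact h
    · rintro ⟨w, hwsum, rfl⟩
      rw [hkey]
      funext i j
      have hcol : ∑ k, a i k * (vmax k * w j) = lamMax * vmax i * w j := by
        calc ∑ k, a i k * (vmax k * w j) = (∑ k, a i k * vmax k) * w j := by
              rw [Finset.sum_mul]; exact Finset.sum_congr rfl fun k _ => by ring
          _ = lamMax * vmax i * w j := by rw [heig i]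
      simp only [Pi.zero_apply]
      rw [hcol]
      linear_combination (vmax i * w j) * hrel
  · -- dimension count
    have hNoR : (No : ℝ) ≠ 0 := by
      have : (0:ℕ) < No := by omega
      exact_mod_cast this.ne'
    set s : (Fin No → ℝ) →ₗ[ℝ] ℝ :=
      { toFun := fun w => ∑ j, w j
        map_add' := fun x y => by simp [Finset.sum_add_distrib]
        map_smul' := fun c x => by simp [Finset.mul_sum] } with hs
    set T : (Fin No → ℝ) →ₗ[ℝ] (Fin Na → Fin No → ℝ) :=
      { toFun := fun w i j => vmax i * w j
        map_add' := fun x y => by funext i j; simp [mul_add]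
        map_smul' := fun c x => by funext i j; simp; ring } with hT
    have hset : {Z : Fin Na → Fin No → ℝ |
        ∃ w : Fin No → ℝ, (∑ j, w j = 0) ∧ Z = fun i j => vmax i * w j}
        = ↑(Submodule.map T (LinearMap.ker s)) := by
      ext Z
      simp only [Set.mem_setOf_eq, SetLike.mem_coe, Submodule.mem_map, LinearMap.mem_ker, hs, hT,
        LinearMap.coe_mk, AddHom.coe_mk]
      constructor
      · rintro ⟨w, h1, h2⟩; exact ⟨w, h1, h2.symm⟩
      · rintro ⟨w, h1, h2⟩; exact ⟨w, h1, h2.symm⟩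
    rw [hset, Submodule.span_eq]
    have hTinj : Function.Injective T := by
      intro w1 w2 h
      funext j
      have := congrFun (congrFun (congrArg (fun f => f) h) i0) j
      simp only [hT, LinearMap.coe_mk, AddHom.coe_mk] at this
      exact mul_left_cancel₀ hi0 this
    rw [← (Submodule.equivMapOfInjective T hTinj (LinearMap.ker s)).finrank_eq]
    have hrk := LinearMap.finrank_range_add_finrank_ker s
    have hrange : LinearMap.range s = ⊤ := by
      rw [LinearMap.range_eq_top]
      intro r
      refine ⟨fun _ => r / No, ?_⟩
      simp only [hs, LinearMap.coe_mk, AddHom.coe_mk, Finset.sum_const, Finset.card_univ,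
        Fintype.card_fin, nsmul_eq_mul]
      field_simp
    rw [hrange, finrank_top, Module.finrank_self, Module.finrank_fin_fun] at hrk
    omega
end

section
/- Consider the homogeneous opinion dynamics with zero inputs and uniform attention, over a network whose adjacency matrix $\tilde A$ is real symmetric with zero diagonal. Assume $d > 0$, $\gamma < \delta$, that the smallest eigenvalue $\lambda_{\min}$ of $\tilde A$ is simple with eigenvector $v_{\min}$, that $\alpha - \beta + \lambda_{\min}(\gamma - \delta) > 0$, and set the attention to the disagreement threshold $u = u_d = \frac{d}{\alpha - \beta + \lambda_{\min}(\gamma - \delta)}$. Then the kernel of the Jacobian $J = Dg(0)$ of the dynamics at the neutral state, restricted to the simplex subspace, is exactly $\{v_{\min} \otimes w : w \in \mathbb{R}^{N_o},\ \sum_{j=1}^{N_o} w_j = 0\}$, where $(v_{\min} \otimes w)_{ij} = (v_{\min})_i w_j$; in particular this kernel has dimension $N_o - 1$. -/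
private lemma deriv_comp_mul' {S : ℝ → ℝ} (hS : HasDerivAt S 1 0) (c : ℝ) :
    HasDerivAt (fun t : ℝ => S (t * c)) c 0 := by
  have h : HasDerivAt (fun t : ℝ => t * c) c 0 := by
    simpa using (hasDerivAt_id (0 : ℝ)).mul_const c
  have hS' : HasDerivAt S 1 ((0 : ℝ) * c) := by rwa [zero_mul]
  simpa [Function.comp_def] using hS'.comp 0 h

/-- At the agreement threshold `u = u_a` (cooperative regime `γ > δ`,
simple largest eigenvalue `λ_max` of the symmetric adjacency matrix with eigenvector
`v_max`), the kernel of the Jacobian `J = Dg(0)` restricted to the simplex subspace is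
exactly `{v_max ⊗ w : ∑_j w_j = 0}`, a subspace of dimension `N_o - 1`. -/
theorem stmt_9 (Na No : ℕ) (hNo : 2 ≤ No)
    (d α β γ δ lamMin : ℝ)
    (hd : 0 < d) (hgd : γ < δ)
    (a : Fin Na → Fin Na → ℝ) (ha : ∀ i k, a i k = 0 ∨ a i k = 1)
    (hdiag : ∀ i, a i i = 0) (hsymm : ∀ i k, a i k = a k i)
    (vmin : Fin Na → ℝ) (hvmin0 : vmin ≠ 0)
    (heig : ∀ i, ∑ k, a i k * vmin k = lamMin * vmin i)
    (hmax : ∀ (lam : ℝ) (v : Fin Na → ℝ), v ≠ 0 →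
      (∀ i, ∑ k, a i k * v k = lam * v i) → lamMin ≤ lam)
    (hsimple : ∀ v : Fin Na → ℝ,
      (∀ i, ∑ k, a i k * v k = lamMin * v i) → ∃ c : ℝ, v = c • vmin)
    (hpos : 0 < α - β + lamMin * (γ - δ))
    (u : ℝ) (hu : u = d / (α - β + lamMin * (γ - δ)))
    (S1 S2 : ℝ → ℝ) (hS10 : S1 0 = 0) (hS20 : S2 0 = 0)
    (hS1 : HasDerivAt S1 1 0) (hS2 : HasDerivAt S2 1 0)
    (F g : (Fin Na → Fin No → ℝ) → Fin Na → Fin No → ℝ)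
    (hF : ∀ Z i j, F Z i j =
      -d * Z i j
        + u * (S1 (α * Z i j + γ * ∑ k ∈ Finset.univ.erase i, a i k * Z k j)
          + ∑ l ∈ Finset.univ.erase j,
              S2 (β * Z i l + δ * ∑ k ∈ Finset.univ.erase i, a i k * Z k l)))
    (hg : ∀ Z i j, g Z i j = F Z i j - (1 / (No : ℝ)) * ∑ l, F Z i l)
    (J : (Fin Na → Fin No → ℝ) →L[ℝ] (Fin Na → Fin No → ℝ))
    (hJ : HasFDerivAt g J 0) :
    (∀ Z : Fin Na → Fin No → ℝ, (∀ i, ∑ j, Z i j = 0) →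
      (J Z = 0 ↔ ∃ w : Fin No → ℝ, (∑ j, w j = 0) ∧ Z = fun i j => vmin i * w j)) ∧
    Module.finrank ℝ
      ↥(Submodule.span ℝ {Z : Fin Na → Fin No → ℝ |
          ∃ w : Fin No → ℝ, (∑ j, w j = 0) ∧ Z = fun i j => vmin i * w j})
      = No - 1 := by
  classical
  have hu0 : 0 < u := by rw [hu]; exact div_pos hd hpos
  set c1 : ℝ := -d + u * (α - β) with hc1
  set c2 : ℝ := u * (γ - δ) with hc2
  have hc2neg : c2 < 0 := mul_neg_of_pos_of_neg hu0 (by linarith)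
  have hc2ne : c2 ≠ 0 := ne_of_lt hc2neg
  have hkey : c1 + c2 * lamMin = 0 := by
    have hP : u * (α - β + lamMin * (γ - δ)) = d := by
      rw [hu]; field_simp
    rw [hc1, hc2]; linear_combination hP
  -- Explicit form of the Jacobian on the simplex subspace
  have hJZ : ∀ Z : Fin Na → Fin No → ℝ, (∀ i, ∑ j, Z i j = 0) →
      ∀ i j, J Z i j = c1 * Z i j + c2 * ∑ k, a i k * Z k j := by
    intro Z hZ i j
    set x : Fin No → ℝ :=
      fun j' => α * Z i j' + γ * ∑ k ∈ Finset.univ.erase i, a i k * Z k j' with hx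
    set y : Fin No → ℝ :=
      fun l => β * Z i l + δ * ∑ k ∈ Finset.univ.erase i, a i k * Z k l with hy
    set Fd : Fin No → ℝ :=
      fun j' => -d * Z i j' + u * (x j' + ∑ l ∈ Finset.univ.erase j', y l) with hFdDef
    have hsum : ∀ (j' : Fin No) (t : ℝ),
        ∑ k ∈ Finset.univ.erase i, a i k * (t * Z k j')
          = t * ∑ k ∈ Finset.univ.erase i, a i k * Z k j' := by
      intro j' t; rw [Finset.mul_sum]; exact Finset.sum_congr rfl fun k _ => by ring
    have hFder : ∀ j' : Fin No, HasDerivAt (fun t : ℝ => F (t • Z) i j') (Fd j') 0 := by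
      intro j'
      have h0 : HasDerivAt (fun t : ℝ => t * Z i j') (Z i j') 0 := by
        simpa using (hasDerivAt_id (0 : ℝ)).mul_const (Z i j')
      have h1 := h0.const_mul (-d)
      have h2 : HasDerivAt (fun t : ℝ => S1 (t * x j')) (x j') 0 := deriv_comp_mul' hS1 (x j')
      have h4 : HasDerivAt (fun t : ℝ => ∑ l ∈ Finset.univ.erase j', S2 (t * y l))
          (∑ l ∈ Finset.univ.erase j', y l) 0 :=
        HasDerivAt.fun_sum fun l _ => deriv_comp_mul' hS2 (y l)
      have h5 := h1.fun_add ((h2.fun_add h4).const_mul u)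
      have heq : (fun t : ℝ => F (t • Z) i j')
          = fun t : ℝ => -d * (t * Z i j')
              + u * (S1 (t * x j') + ∑ l ∈ Finset.univ.erase j', S2 (t * y l)) := by
        funext t
        rw [hF]
        simp only [Pi.smul_apply, smul_eq_mul]
        have e1 : α * (t * Z i j') + γ * ∑ k ∈ Finset.univ.erase i, a i k * (t * Z k j')
            = t * x j' := by
          rw [hsum]; simp only [hx]; ring
        have e2 : ∀ l, β * (t * Z i l) + δ * ∑ k ∈ Finset.univ.erase i, a i k * (t * Z k l)
            = t * y l := by
          intro l; rw [hsum]; simp only [hy]; ring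
        rw [e1]
        have e4 : ∑ l ∈ Finset.univ.erase j',
            S2 (β * (t * Z i l) + δ * ∑ k ∈ Finset.univ.erase i, a i k * (t * Z k l))
            = ∑ l ∈ Finset.univ.erase j', S2 (t * y l) :=
          Finset.sum_congr rfl fun l _ => by rw [e2]
        rw [e4]
      rw [heq]
      simpa only [hFdDef] using h5
    have hgder : HasDerivAt (fun t : ℝ => g (t • Z) i j)
        (Fd j - (1 / (No : ℝ)) * ∑ l, Fd l) 0 := by
      have h6 : HasDerivAt (fun t : ℝ => ∑ l, F (t • Z) i l) (∑ l, Fd l) 0 :=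
        HasDerivAt.fun_sum fun l _ => hFder l
      have h7 := (hFder j).sub (h6.const_mul (1 / (No : ℝ)))
      have heq : (fun t : ℝ => g (t • Z) i j)
          = fun t : ℝ => F (t • Z) i j - (1 / (No : ℝ)) * ∑ l, F (t • Z) i l := by
        funext t; rw [hg]
      rw [heq]; exact h7
    have hJder : HasDerivAt (fun t : ℝ => g (t • Z)) (J Z) 0 := by
      have h1 : HasDerivAt (fun t : ℝ => t • Z) Z 0 := by
        simpa using (hasDerivAt_id (0 : ℝ)).smul_const Z
      have h2 : HasFDerivAt g J ((0 : ℝ) • Z) := by rwa [zero_smul]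
      simpa [Function.comp_def] using h2.comp_hasDerivAt 0 h1
    have hJij : HasDerivAt (fun t : ℝ => g (t • Z) i j) (J Z i j) 0 :=
      hasDerivAt_pi.mp (hasDerivAt_pi.mp hJder i) j
    have huniq : J Z i j = Fd j - (1 / (No : ℝ)) * ∑ l, Fd l := hJij.unique hgder
    -- simplify Fd on the simplex
    have hAZ : ∀ j' : Fin No,
        ∑ k ∈ Finset.univ.erase i, a i k * Z k j' = ∑ k, a i k * Z k j' :=
      fun j' => Finset.sum_erase _ (by rw [hdiag i, zero_mul])
    have hrowA : ∑ l, ∑ k, a i k * Z k l = 0 := by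
      rw [Finset.sum_comm]
      refine Finset.sum_eq_zero fun k _ => ?_
      rw [← Finset.mul_sum, hZ k, mul_zero]
    have hFdval : ∀ j', Fd j' = c1 * Z i j' + c2 * ∑ k, a i k * Z k j' := by
      intro j'
      have e1 : ∑ l ∈ Finset.univ.erase j', Z i l = -Z i j' := by
        rw [Finset.sum_erase_eq_sub (Finset.mem_univ j'), hZ i]; ring
      have e2 : ∑ l ∈ Finset.univ.erase j', ∑ k, a i k * Z k l
          = -∑ k, a i k * Z k j' := by
        rw [Finset.sum_erase_eq_sub (Finset.mem_univ j'), hrowA]; ring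
      have e3 : ∑ l ∈ Finset.univ.erase j', y l
          = β * (∑ l ∈ Finset.univ.erase j', Z i l)
            + δ * (∑ l ∈ Finset.univ.erase j', ∑ k, a i k * Z k l) := by
        rw [Finset.mul_sum, Finset.mul_sum, ← Finset.sum_add_distrib]
        refine Finset.sum_congr rfl fun l _ => ?_
        simp only [hy]
        rw [hAZ l]
      simp only [hFdDef, hx]
      rw [hAZ j', e3, e1, e2, hc1, hc2]
      ring
    have hsumFd : ∑ l, Fd l = 0 := by
      calc ∑ l, Fd l = ∑ l, (c1 * Z i l + c2 * ∑ k, a i k * Z k l) :=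
            Finset.sum_congr rfl fun l _ => hFdval l
        _ = c1 * (∑ l, Z i l) + c2 * (∑ l, ∑ k, a i k * Z k l) := by
            rw [Finset.sum_add_distrib, Finset.mul_sum, Finset.mul_sum]
        _ = 0 := by rw [hZ i, hrowA]; ring
    rw [huniq, hsumFd, mul_zero, sub_zero, hFdval]
  obtain ⟨i0, hi0⟩ : ∃ i0, vmin i0 ≠ 0 := Function.ne_iff.mp hvmin0
  constructor
  · intro Z hZ
    constructor
    · intro h0
      have hcol : ∀ j, ∃ c : ℝ, (fun i => Z i j) = c • vmin := by
        intro j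
        apply hsimple
        intro i
        have h1 : c1 * Z i j + c2 * ∑ k, a i k * Z k j = 0 := by
          have h := hJZ Z hZ i j
          rw [h0] at h
          simpa using h.symm
        have h2 : c2 * (∑ k, a i k * Z k j) = c2 * (lamMin * Z i j) := by
          linear_combination h1 - Z i j * hkey
        exact mul_left_cancel₀ hc2ne h2
      choose w hw using hcol
      refine ⟨w, ?_, ?_⟩
      · have h4 : ∀ j, Z i0 j = w j * vmin i0 := fun j => by
          have := congrFun (hw j) i0
          simpa using this
        have h3 : ∑ j, Z i0 j = 0 := hZ i0
        rw [Finset.sum_congr rfl fun j _ => h4 j, ← Finset.sum_mul] at h3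
        rcases mul_eq_zero.mp h3 with h | h
        · exact h
        · exact absurd h hi0
      · funext i j
        have := congrFun (hw j) i
        simp only [Pi.smul_apply, smul_eq_mul] at this
        rw [this, mul_comm]
    · rintro ⟨w, hwsum, rfl⟩
      funext i j
      have h1 := hJZ _ hZ i j
      have e : ∑ k, a i k * (vmin k * w j) = lamMin * vmin i * w j := by
        have : ∑ k, a i k * (vmin k * w j) = (∑ k, a i k * vmin k) * w j := by
          rw [Finset.sum_mul]; exact Finset.sum_congr rfl fun k _ => by ring
        rw [this, heig i]
      show J _ i j = 0
      rw [h1, e]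
      linear_combination (vmin i * w j) * hkey
  · -- dimension count
    let T : (Fin No → ℝ) →ₗ[ℝ] (Fin Na → Fin No → ℝ) :=
      { toFun := fun w i j => vmin i * w j
        map_add' := fun w1 w2 => by funext i j; simp [mul_add]
        map_smul' := fun c w => by
          funext i j
          simp only [Pi.smul_apply, smul_eq_mul, RingHom.id_apply]
          ring }
    let σ : (Fin No → ℝ) →ₗ[ℝ] ℝ :=
      { toFun := fun w => ∑ j, w j
        map_add' := fun w1 w2 => by simp [Finset.sum_add_distrib]
        map_smul' := fun c w => by simp [Finset.mul_sum] }
    have hTinj : Function.Injective T := by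
      intro w1 w2 h
      funext j
      have h' := congrFun (congrFun h i0) j
      simp only [T, LinearMap.coe_mk, AddHom.coe_mk] at h'
      exact mul_left_cancel₀ hi0 h'
    have hset : {Z : Fin Na → Fin No → ℝ |
          ∃ w : Fin No → ℝ, (∑ j, w j = 0) ∧ Z = fun i j => vmin i * w j}
        = ↑((LinearMap.ker σ).map T) := by
      ext Z
      simp only [Set.mem_setOf_eq, SetLike.mem_coe, Submodule.mem_map, LinearMap.mem_ker,
        σ, T, LinearMap.coe_mk, AddHom.coe_mk]
      constructor
      · rintro ⟨w, hw, rfl⟩; exact ⟨w, hw, rfl⟩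
      · rintro ⟨w, hw, rfl⟩; exact ⟨w, hw, rfl⟩
    rw [hset, Submodule.span_eq]
    have hrank : Module.finrank ℝ ↥((LinearMap.ker σ).map T)
        = Module.finrank ℝ ↥(LinearMap.ker σ) :=
      (LinearEquiv.finrank_eq (Submodule.equivMapOfInjective T hTinj (LinearMap.ker σ))).symm
    have hσsurj : LinearMap.range σ = ⊤ := by
      rw [LinearMap.range_eq_top]
      intro z
      refine ⟨Pi.single ⟨0, by omega⟩ z, ?_⟩
      simp [σ, Finset.sum_pi_single']
    have hdim := LinearMap.finrank_range_add_finrank_ker σ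
    rw [hσsurj, finrank_top, Module.finrank_self,
      Module.finrank_fintype_fun_eq_card, Fintype.card_fin] at hdim
    rw [hrank]
    omega
end

section
/- Consider a single agent $i$ with no neighbors ($\tilde a_{ik} = 0$ for all $k$) and zero input, so its opinion dynamics are $\dot z_{ij} = g_{ij}(Z_i)$ with $g_{ij}(Z_i) = F_{ij}(Z_i) - \frac{1}{N_o}\sum_{l=1}^{N_o} F_{il}(Z_i)$ and $F_{ij}(Z_i) = -d\, z_{ij} + u_i\big(S_1(\alpha z_{ij}) + \sum_{l \ne j} S_2(\beta z_{il})\big)$. Then the Jacobian of $g$ at $Z_i = 0$ acts on the simplex subspace as a scalar multiple of the identity: for every $w \in \mathbb{R}^{N_o}$ with $\sum_{j=1}^{N_o} w_j = 0$, one has $Dg(0)\, w = \big(-d + u_i(\alpha - \beta)\big)\, w$. Consequently, if $\alpha - \beta > 0$, the neutral state is linearly stable for $u_i < u_i^* = \frac{d}{\alpha - \beta}$ and linearly unstable for $u_i > u_i^*$. -/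
/-- For a single agent with no neighbors and zero input, the Jacobian of
the opinion dynamics at the neutral state acts on the simplex subspace as the scalar
`-d + u_i(α - β)`; hence (with `α - β > 0`) the neutral state is linearly stable for
`u_i < u_i* = d/(α-β)` and linearly unstable for `u_i > u_i*`. -/
theorem stmt_13 (No : ℕ) (hNo : 2 ≤ No)
    (d ui α β : ℝ) (hd : 0 < d) (hui : 0 ≤ ui) (hα : 0 ≤ α) (hβ : β < 0)
    (S1 S2 : ℝ → ℝ) (hS10 : S1 0 = 0) (hS20 : S2 0 = 0)
    (hS1 : HasDerivAt S1 1 0) (hS2 : HasDerivAt S2 1 0)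
    (F g : (Fin No → ℝ) → Fin No → ℝ)
    (hF : ∀ z j, F z j =
      -d * z j + ui * (S1 (α * z j) + ∑ l ∈ Finset.univ.erase j, S2 (β * z l)))
    (hg : ∀ z j, g z j = F z j - (1 / (No : ℝ)) * ∑ l, F z l)
    (J : (Fin No → ℝ) →L[ℝ] (Fin No → ℝ)) (hJ : HasFDerivAt g J 0) :
    (∀ w : Fin No → ℝ, (∑ j, w j = 0) → J w = (-d + ui * (α - β)) • w) ∧
    (ui < d / (α - β) → -d + ui * (α - β) < 0) ∧
    (d / (α - β) < ui → 0 < -d + ui * (α - β)) := by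
  have hαβ : 0 < α - β := by linarith
  set c : ℝ := -d + ui * (α - β) with hc
  refine ⟨?_, ?_, ?_⟩
  · intro w hw
    -- derivative of t ↦ F (t • w) j at 0
    have hFd : ∀ j : Fin No, HasDerivAt (fun t : ℝ => F (t • w) j) (c * w j) 0 := by
      intro j
      have h1 : HasDerivAt (fun t : ℝ => -d * (t * w j)) (-d * w j) 0 := by
        simpa using ((hasDerivAt_id (0 : ℝ)).mul_const (w j)).const_mul (-d)
      have hin : ∀ x : Fin No, HasDerivAt (fun t : ℝ => α * (t * w x)) (α * w x) 0 := by
        intro x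
        simpa using ((hasDerivAt_id (0 : ℝ)).mul_const (w x)).const_mul α
      have hin2 : ∀ x : Fin No, HasDerivAt (fun t : ℝ => β * (t * w x)) (β * w x) 0 := by
        intro x
        simpa using ((hasDerivAt_id (0 : ℝ)).mul_const (w x)).const_mul β
      have h2 : HasDerivAt (fun t : ℝ => S1 (α * (t * w j))) (α * w j) 0 := by
        have hS1' : HasDerivAt S1 1 (α * (0 * w j)) := by simpa using hS1
        simpa [Function.comp_def] using hS1'.comp (0 : ℝ) (hin j)
      have h3 : ∀ x : Fin No,
          HasDerivAt (fun t : ℝ => S2 (β * (t * w x))) (β * w x) 0 := by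
        intro x
        have hS2' : HasDerivAt S2 1 (β * (0 * w x)) := by simpa using hS2
        simpa [Function.comp_def] using hS2'.comp (0 : ℝ) (hin2 x)
      have h4 : HasDerivAt (fun t : ℝ => ∑ l ∈ Finset.univ.erase j, S2 (β * (t * w l)))
          (∑ l ∈ Finset.univ.erase j, β * w l) 0 :=
        HasDerivAt.fun_sum fun l _ => h3 l
      have h5 : HasDerivAt (fun t : ℝ => F (t • w) j)
          (-d * w j + ui * (α * w j + ∑ l ∈ Finset.univ.erase j, β * w l)) 0 := by
        have := h1.add ((h2.add h4).const_mul ui)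
        refine this.congr_of_eventuallyEq (Filter.Eventually.of_forall fun t => ?_)
        simp [hF, Pi.smul_apply, smul_eq_mul]
      have hsum : ∑ l ∈ Finset.univ.erase j, w l = -w j := by
        have := Finset.add_sum_erase Finset.univ w (Finset.mem_univ j)
        rw [hw] at this
        linarith
      convert h5 using 1
      rw [← Finset.mul_sum, hsum, hc]
      ring
    -- derivative of t ↦ g (t • w) j at 0 is c * w j
    have hgd : ∀ j : Fin No, HasDerivAt (fun t : ℝ => g (t • w) j) (c * w j) 0 := by
      intro j
      have hsum : HasDerivAt (fun t : ℝ => ∑ l, F (t • w) l) (∑ l, c * w l) 0 :=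
        HasDerivAt.fun_sum fun l _ => hFd l
      have hz : (∑ l, c * w l) = 0 := by rw [← Finset.mul_sum, hw, mul_zero]
      have := (hFd j).sub (hsum.const_mul (1 / (No : ℝ)))
      have h' : HasDerivAt (fun t : ℝ => g (t • w) j)
          (c * w j - 1 / (No : ℝ) * ∑ l, c * w l) 0 := by
        refine this.congr_of_eventuallyEq (Filter.Eventually.of_forall fun t => ?_)
        simp [hg]
      simpa [hz] using h'
    -- derivative via J
    have hline : HasDerivAt (fun t : ℝ => t • w) w 0 := by
      simpa using (hasDerivAt_id (0 : ℝ)).smul_const w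
    have hcomp : HasDerivAt (fun t : ℝ => g (t • w)) (J w) 0 := by
      have hJ' : HasFDerivAt g J ((0 : ℝ) • w) := by simpa using hJ
      simpa [Function.comp_def] using hJ'.comp_hasDerivAt (0 : ℝ) hline
    funext j
    have hj : HasDerivAt (fun t : ℝ => g (t • w) j) (J w j) 0 :=
      (hasDerivAt_pi.mp hcomp) j
    have := hj.unique (hgd j)
    simpa [Pi.smul_apply, smul_eq_mul] using this
  · intro h
    have : ui * (α - β) < d := by
      have := (lt_div_iff₀ hαβ).mp h
      linarith
    simp only [hc]; linarith
  · intro h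
    have : d < ui * (α - β) := by
      have := (div_lt_iff₀ hαβ).mp h
      linarith
    simp only [hc]; linarith
end

section
/- In the homogeneous opinion dynamics with zero inputs over a network with symmetric adjacency matrix ($\tilde a_{ik} = \tilde a_{ki} \in \{0,1\}$, zero diagonal), for any two distinct agents $i \ne k$ and any options $j, l$, the product of the cross partial derivatives of the vector field at the neutral state satisfies: $\frac{\partial g_{ij}}{\partial z_{kl}}(0) \cdot \frac{\partial g_{kl}}{\partial z_{ij}}(0) = \frac{1}{N_o^2}\, u_i u_k (\gamma - \delta)^2\, \tilde a_{ik}$ if $l \ne j$, and $\frac{\partial g_{ij}}{\partial z_{kj}}(0) \cdot \frac{\partial g_{kj}}{\partial z_{ij}}(0) = \Big(\frac{N_o - 1}{N_o}\Big)^2 u_i u_k (\gamma - \delta)^2\, \tilde a_{ik}$ if $l = j$. In particular, for $u_i, u_k \ge 0$ both products are nonnegative, regardless of the excitatory or inhibitory nature of the coupling: connected agents are in an element-wise positive feedback loop near the neutral state. -/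
section AuxStmt16

private lemma auxF_stmt16 {Na No : ℕ} (d : ℝ)
    (u : Fin Na → ℝ) (α β γ δ : ℝ)
    (a : Fin Na → Fin Na → ℝ)
    (S1 S2 : ℝ → ℝ)
    (hS1 : HasDerivAt S1 1 0) (hS2 : HasDerivAt S2 1 0)
    (F : (Fin Na → Fin No → ℝ) → Fin Na → Fin No → ℝ)
    (hF : ∀ Z i j, F Z i j =
      -d * Z i j
        + u i * (S1 (α * Z i j + γ * ∑ k ∈ Finset.univ.erase i, a i k * Z k j)
          + ∑ l ∈ Finset.univ.erase j,
              S2 (β * Z i l + δ * ∑ k ∈ Finset.univ.erase i, a i k * Z k l)))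
    (i k : Fin Na) (hik : i ≠ k) (j l : Fin No) :
    HasDerivAt (fun t : ℝ => F (fun k' l' => if k' = k ∧ l' = l then t else 0) i j)
      (u i * a i k * (if j = l then γ else δ)) 0 := by
  have hsum : ∀ (t : ℝ) (j' : Fin No),
      (∑ k' ∈ Finset.univ.erase i, a i k' * (if k' = k ∧ j' = l then t else 0))
        = (if j' = l then a i k else 0) * t := by
    intro t j'
    rw [Finset.sum_eq_single k]
    · by_cases h : j' = l <;> simp [h]
    · intro b _ hb; simp [hb]
    · intro h
      exact absurd (Finset.mem_erase.mpr ⟨fun he => hik he.symm, Finset.mem_univ k⟩) h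
  have heq : (fun t : ℝ => F (fun k' l' => if k' = k ∧ l' = l then t else 0) i j)
      = fun t : ℝ => -d * 0 + u i *
        (S1 (α * 0 + γ * ((if j = l then a i k else 0) * t))
          + ∑ l' ∈ Finset.univ.erase j,
              S2 (β * 0 + δ * ((if l' = l then a i k else 0) * t))) := by
    funext t
    rw [hF]
    simp only [hsum, if_neg (fun h : i = k ∧ _ => hik h.1)]
  rw [heq]
  have hin : ∀ c : ℝ, HasDerivAt (fun t : ℝ => α * 0 + γ * (c * t)) (γ * c) 0 := by
    intro c
    simpa using (((hasDerivAt_id (0:ℝ)).const_mul c).const_mul γ).const_add (α * 0)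
  have hin2 : ∀ c : ℝ, HasDerivAt (fun t : ℝ => β * 0 + δ * (c * t)) (δ * c) 0 := by
    intro c
    simpa using (((hasDerivAt_id (0:ℝ)).const_mul c).const_mul δ).const_add (β * 0)
  have h1 : ∀ c : ℝ, HasDerivAt (fun t : ℝ => S1 (α * 0 + γ * (c * t))) (γ * c) 0 := by
    intro c
    have hS1' : HasDerivAt S1 1 (α * 0 + γ * (c * 0)) := by simpa using hS1
    have h := hS1'.comp 0 (hin c); rw [one_mul] at h; exact h
  have h2 : ∀ c : ℝ, HasDerivAt (fun t : ℝ => S2 (β * 0 + δ * (c * t))) (δ * c) 0 := by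
    intro c
    have hS2' : HasDerivAt S2 1 (β * 0 + δ * (c * 0)) := by simpa using hS2
    have h := hS2'.comp 0 (hin2 c); rw [one_mul] at h; exact h
  have hD : HasDerivAt (fun t : ℝ => -d * 0 + u i *
        (S1 (α * 0 + γ * ((if j = l then a i k else 0) * t))
          + ∑ l' ∈ Finset.univ.erase j,
              S2 (β * 0 + δ * ((if l' = l then a i k else 0) * t))))
      (u i * (γ * (if j = l then a i k else 0)
        + ∑ l' ∈ Finset.univ.erase j, δ * (if l' = l then a i k else 0))) 0 := by
    exact (((h1 _).add (HasDerivAt.fun_sum (fun l' _ => h2 _))).const_mul (u i)).const_add (-d * 0)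
  convert hD using 1
  have : (∑ l' ∈ Finset.univ.erase j, δ * (if l' = l then a i k else 0))
      = if l ∈ Finset.univ.erase j then δ * a i k else 0 := by
    simp [mul_ite, mul_zero, Finset.sum_ite_eq']
  rw [this]
  by_cases h : j = l
  · simp [h, Finset.mem_erase]
    ring
  · simp [h, Finset.mem_erase, Ne.symm h]
    ring

private lemma auxg_stmt16 {Na No : ℕ} (d : ℝ)
    (u : Fin Na → ℝ) (α β γ δ : ℝ)
    (a : Fin Na → Fin Na → ℝ)
    (S1 S2 : ℝ → ℝ)
    (hS1 : HasDerivAt S1 1 0) (hS2 : HasDerivAt S2 1 0)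
    (F g : (Fin Na → Fin No → ℝ) → Fin Na → Fin No → ℝ)
    (hF : ∀ Z i j, F Z i j =
      -d * Z i j
        + u i * (S1 (α * Z i j + γ * ∑ k ∈ Finset.univ.erase i, a i k * Z k j)
          + ∑ l ∈ Finset.univ.erase j,
              S2 (β * Z i l + δ * ∑ k ∈ Finset.univ.erase i, a i k * Z k l)))
    (hg : ∀ Z i j, g Z i j = F Z i j - (1 / (No : ℝ)) * ∑ l, F Z i l)
    (i k : Fin Na) (hik : i ≠ k) (j l : Fin No) :
    HasDerivAt (fun t : ℝ => g (fun k' l' => if k' = k ∧ l' = l then t else 0) i j)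
      (u i * a i k * ((if j = l then γ else δ)
        - (1 / (No : ℝ)) * (γ + ((No : ℝ) - 1) * δ))) 0 := by
  have hauxF := auxF_stmt16 d u α β γ δ a S1 S2 hS1 hS2 F hF
  have heq : (fun t : ℝ => g (fun k' l' => if k' = k ∧ l' = l then t else 0) i j)
      = fun t : ℝ => F (fun k' l' => if k' = k ∧ l' = l then t else 0) i j
          - (1 / (No : ℝ)) * ∑ l', F (fun k' l' => if k' = k ∧ l' = l then t else 0) i l' := by
    funext t; rw [hg]
  rw [heq]
  have hsumD : HasDerivAt
      (fun t : ℝ => ∑ l' : Fin No, F (fun k' l' => if k' = k ∧ l' = l then t else 0) i l')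
      (∑ l' : Fin No, u i * a i k * (if l' = l then γ else δ)) 0 :=
    HasDerivAt.fun_sum (fun l' _ => hauxF i k hik l' l)
  have hD := (hauxF i k hik j l).sub (hsumD.const_mul (1 / (No : ℝ)))
  refine hD.congr_deriv ?_
  have hsum : (∑ l' : Fin No, u i * a i k * (if l' = l then γ else δ))
      = u i * a i k * (γ + ((No : ℝ) - 1) * δ) := by
    have h1 : ∀ l' : Fin No, u i * a i k * (if l' = l then γ else δ)
        = u i * a i k * δ + (if l' = l then u i * a i k * (γ - δ) else 0) := by
      intro l'; split <;> ring
    simp only [h1, Finset.sum_add_distrib, Finset.sum_const, Finset.card_univ,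
      Fintype.card_fin, Finset.sum_ite_eq', Finset.mem_univ, if_true, nsmul_eq_mul]
    ring
  rw [hsum]; ring

end AuxStmt16

/-- Over a symmetric network, for distinct agents `i ≠ k`, the product of
the cross partial derivatives of the vector field at the neutral state satisfies
`∂g_{ij}/∂z_{kl}(0) · ∂g_{kl}/∂z_{ij}(0) = (1/N_o²) u_i u_k (γ-δ)² ã_{ik}` if `l ≠ j`,
and `((N_o-1)/N_o)² u_i u_k (γ-δ)² ã_{ik}` if `l = j`; in particular both products are
nonnegative: connected agents are in an element-wise positive feedback loop. -/
theorem stmt_16 (Na No : ℕ) (hNo : 2 ≤ No)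
    (d : ℝ) (hd : 0 < d)
    (u : Fin Na → ℝ) (hu : ∀ i, 0 ≤ u i)
    (α β γ δ : ℝ)
    (a : Fin Na → Fin Na → ℝ) (ha : ∀ i k, a i k = 0 ∨ a i k = 1)
    (hdiag : ∀ i, a i i = 0) (hsymm : ∀ i k, a i k = a k i)
    (S1 S2 : ℝ → ℝ) (hS10 : S1 0 = 0) (hS20 : S2 0 = 0)
    (hS1 : HasDerivAt S1 1 0) (hS2 : HasDerivAt S2 1 0)
    (F g : (Fin Na → Fin No → ℝ) → Fin Na → Fin No → ℝ)
    (hF : ∀ Z i j, F Z i j =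
      -d * Z i j
        + u i * (S1 (α * Z i j + γ * ∑ k ∈ Finset.univ.erase i, a i k * Z k j)
          + ∑ l ∈ Finset.univ.erase j,
              S2 (β * Z i l + δ * ∑ k ∈ Finset.univ.erase i, a i k * Z k l)))
    (hg : ∀ Z i j, g Z i j = F Z i j - (1 / (No : ℝ)) * ∑ l, F Z i l)
    (i k : Fin Na) (hik : i ≠ k) :
    ∀ (j l : Fin No) (p q : ℝ),
      HasDerivAt
        (fun t : ℝ => g (fun k' l' => if k' = k ∧ l' = l then t else 0) i j) p 0 →
      HasDerivAt
        (fun t : ℝ => g (fun k' l' => if k' = i ∧ l' = j then t else 0) k l) q 0 →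
      (l ≠ j → p * q = (1 / (No : ℝ) ^ 2) * u i * u k * (γ - δ) ^ 2 * a i k) ∧
      (l = j → p * q = (((No : ℝ) - 1) / (No : ℝ)) ^ 2 * u i * u k * (γ - δ) ^ 2 * a i k) ∧
      0 ≤ p * q := by
  intro j l p q hp hq
  have hNo0 : (No : ℝ) ≠ 0 := by
    have : (0 : ℕ) < No := lt_of_lt_of_le two_pos hNo
    exact_mod_cast this.ne'
  have hP := auxg_stmt16 d u α β γ δ a S1 S2 hS1 hS2 F g hF hg i k hik j l
  have hQ := auxg_stmt16 d u α β γ δ a S1 S2 hS1 hS2 F g hF hg k i hik.symm l j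
  have hpe : p = u i * a i k * ((if j = l then γ else δ)
      - (1 / (No : ℝ)) * (γ + ((No : ℝ) - 1) * δ)) := hp.unique hP
  have hqe : q = u k * a i k * ((if l = j then γ else δ)
      - (1 / (No : ℝ)) * (γ + ((No : ℝ) - 1) * δ)) := by
    rw [hsymm i k]; exact hq.unique hQ
  have hA : 0 ≤ a i k := by rcases ha i k with h | h <;> rw [h] <;> norm_num
  have hne : l ≠ j → p * q = (1 / (No : ℝ) ^ 2) * u i * u k * (γ - δ) ^ 2 * a i k := by
    intro hlj
    rw [hpe, hqe, if_neg hlj, if_neg (Ne.symm hlj)]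
    rcases ha i k with h | h <;> rw [h] <;> field_simp <;> ring
  have heq' : l = j → p * q = (((No : ℝ) - 1) / (No : ℝ)) ^ 2 * u i * u k * (γ - δ) ^ 2 * a i k := by
    intro hlj
    rw [hpe, hqe, if_pos hlj, if_pos hlj.symm]
    rcases ha i k with h | h <;> rw [h] <;> field_simp <;> ring
  refine ⟨hne, heq', ?_⟩
  by_cases hlj : l = j
  · rw [heq' hlj]
    exact mul_nonneg (mul_nonneg (mul_nonneg (mul_nonneg (sq_nonneg _) (hu i)) (hu k)) (sq_nonneg _)) hA
  · rw [hne hlj]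
    exact mul_nonneg (mul_nonneg (mul_nonneg (mul_nonneg (by positivity) (hu i)) (hu k)) (sq_nonneg _)) hA
end
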